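/- Let S : ℂ⁴ → ℂ⁴ be the linear map S(z1,z2,z3,z4) = ((z1+z2+z3−z4)/2, (z1+z2−z3+z4)/2, (z1−z2+z3+z4)/2, (−z1+z2+z3+z4)/2). Then, as identities of polynomial functions on ℂ⁴, T1 ∘ S = T3, T2 ∘ S = T2, and T3 ∘ S = T1. -/
import Mathlib


open MvPolynomial Complex

/-- `I2 = z1²+z2²+z3²+z4²` as a function on ℂ⁴ -/
noncomputable def fI2 (z : Fin 4 → ℂ) : ℂ := ∑ i, z i ^ 2

/-- `I4 = Σ_{i<j} zi²zj²` as a function on ℂ⁴ -/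
noncomputable def fI4 (z : Fin 4 → ℂ) : ℂ :=
  ∑ p ∈ Finset.univ.filter (fun p : Fin 4 × Fin 4 => p.1 < p.2), z p.1 ^ 2 * z p.2 ^ 2

/-- `I6 = Σ_{i<j<k} zi²zj²zk²` as a function on ℂ⁴ -/
noncomputable def fI6 (z : Fin 4 → ℂ) : ℂ :=
  ∑ p ∈ Finset.univ.filter (fun p : Fin 4 × Fin 4 × Fin 4 => p.1 < p.2.1 ∧ p.2.1 < p.2.2),
    z p.1 ^ 2 * z p.2.1 ^ 2 * z p.2.2 ^ 2

/-- `Ĩ4 = z1z2z3z4` as a function on ℂ⁴ -/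
noncomputable def fI4t (z : Fin 4 → ℂ) : ℂ := ∏ i, z i

/-- `T1 = I4/6 − I2²/24` -/
noncomputable def fT1 (z : Fin 4 → ℂ) : ℂ := fI4 z / 6 - fI2 z ^ 2 / 24

/-- `T2 = −I4/12 − Ĩ4/2 + I2²/48` -/
noncomputable def fT2 (z : Fin 4 → ℂ) : ℂ := -fI4 z / 12 - fI4t z / 2 + fI2 z ^ 2 / 48

/-- `T3 = −I4/12 + Ĩ4/2 + I2²/48` -/
noncomputable def fT3 (z : Fin 4 → ℂ) : ℂ := -fI4 z / 12 + fI4t z / 2 + fI2 z ^ 2 / 48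

/-- The linear map `S : ℂ⁴ → ℂ⁴`. -/
noncomputable def Smap (z : Fin 4 → ℂ) : Fin 4 → ℂ :=
  ![(z 0 + z 1 + z 2 - z 3) / 2, (z 0 + z 1 - z 2 + z 3) / 2,
    (z 0 - z 1 + z 2 + z 3) / 2, (-z 0 + z 1 + z 2 + z 3) / 2]

lemma fI4_eq (z : Fin 4 → ℂ) : fI4 z =
    z 0 ^ 2 * z 1 ^ 2 + z 0 ^ 2 * z 2 ^ 2 + z 0 ^ 2 * z 3 ^ 2 +
    z 1 ^ 2 * z 2 ^ 2 + z 1 ^ 2 * z 3 ^ 2 + z 2 ^ 2 * z 3 ^ 2 := by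
  simp only [fI4, Finset.sum_filter, Fintype.sum_prod_type, Fin.sum_univ_four]
  norm_num [Fin.lt_def, show ((3 : Fin 4) : ℕ) = 3 from rfl]
  ring

/-- As identities of polynomial functions on ℂ⁴: `T1 ∘ S = T3`, `T2 ∘ S = T2`,
`T3 ∘ S = T1`. -/
theorem stmt_19 :
    (∀ z : Fin 4 → ℂ, fT1 (Smap z) = fT3 z) ∧
    (∀ z : Fin 4 → ℂ, fT2 (Smap z) = fT2 z) ∧
    (∀ z : Fin 4 → ℂ, fT3 (Smap z) = fT1 z) := by
  refine ⟨fun z => ?_, fun z => ?_, fun z => ?_⟩ <;>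
  · simp only [fT1, fT2, fT3, fI4_eq, fI2, fI4t, Smap, Fin.sum_univ_four, Fin.prod_univ_four,
      Finset.sum_filter, Matrix.cons_val_zero,
      Matrix.cons_val_one, Matrix.head_cons, Matrix.cons_val_two, Matrix.tail_cons,
      Matrix.cons_val_three, Fin.sum_univ_zero]
    norm_num
    ring
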